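/- arXiv:1709.08874 — 2 statements merged into one kernel-verified Lean document; each statement's English description precedes it below -/
import Mathlib

section
/- The sabra shell bilinear map B satisfies |B(u,v)| ≤ C₂ ‖u‖_V |v| for all u ∈ V and v ∈ H, where C₂ = 2|a| + 2λ|b|. -/
/-! Each of the four terms of `B(u,v)ₙ` is at most a coefficient times `kₘ|uₘ| · |vₘ'|` with
`m, m'` within two of `n`; the `b`-terms pick up the factor `λ` because `kₙ ≤ λ kₙ₋₁`.
Bounding `|vₘ'|` by `|v|`, and using that shifting the index does not change the ℓ² norm of
`(kₘ|uₘ|)` since `u₀ = 0`, each term has ℓ² norm at most its coefficient times `‖u‖_V |v|`;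
Minkowski's inequality adds up the four bounds. -/

/-- The sabra shell model bilinear map `B(u,v)`, with the convention
`u₀ = u₋₁ = v₀ = v₋₁ = 0`. -/
noncomputable def shellB (k : ℕ → ℝ) (a b : ℝ) (u v : ℕ → ℂ) : ℕ → ℂ := fun n =>
  if n = 0 then 0 else
    (-Complex.I) * ((a : ℂ) * (k (n + 1) : ℂ) * v (n + 2) * (starRingEnd ℂ) (u (n + 1))
      + (b : ℂ) * (k n : ℂ) * v (n + 1) * (starRingEnd ℂ) (u (n - 1))
      + (a : ℂ) * (k (n - 1) : ℂ) * u (n - 1) * v (n - 2)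
      + (b : ℂ) * (k (n - 1) : ℂ) * v (n - 1) * u (n - 2))

open Real

section SquareSummable

variable {ι : Type*}

theorem summable_sq_add_and_sqrt_tsum_sq_add_le {f g : ι → ℝ}
    (hf : Summable fun i => f i ^ 2) (hg : Summable fun i => g i ^ 2) :
    (Summable fun i => (f i + g i) ^ 2) ∧
      √(∑' i, (f i + g i) ^ 2) ≤ √(∑' i, f i ^ 2) + √(∑' i, g i ^ 2) := by
  have habs : ∀ h : ι → ℝ, (fun i => |h i| ^ (2 : ℝ)) = fun i => h i ^ 2 := fun h => by
    ext i; rw [rpow_two, sq_abs]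
  obtain ⟨hsum, hle⟩ := Lp_add_le_tsum_of_nonneg one_le_two (fun i => abs_nonneg (f i))
    (fun i => abs_nonneg (g i)) (habs f ▸ hf) (habs g ▸ hg)
  simp only [rpow_two, sq_abs, ← sqrt_eq_rpow] at hsum hle
  have hdom : ∀ i, (f i + g i) ^ 2 ≤ (|f i| + |g i|) ^ 2 := fun i => by
    rw [← sq_abs]; exact pow_le_pow_left₀ (abs_nonneg _) (abs_add_le _ _) 2
  have hsum' : Summable fun i => (f i + g i) ^ 2 :=
    hsum.of_nonneg_of_le (fun i => sq_nonneg _) hdom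
  exact ⟨hsum', (sqrt_le_sqrt (hsum'.tsum_le_tsum hdom hsum)).trans hle⟩

theorem sqrt_tsum_norm_sq_le {E : Type*} [SeminormedAddCommGroup E] {f : ι → E} {g : ι → ℝ}
    (hfg : ∀ i, ‖f i‖ ≤ g i) (hg : Summable fun i => g i ^ 2) :
    √(∑' i, ‖f i‖ ^ 2) ≤ √(∑' i, g i ^ 2) := by
  have hdom : ∀ i, ‖f i‖ ^ 2 ≤ g i ^ 2 := fun i => pow_le_pow_left₀ (norm_nonneg _) (hfg i) 2
  exact sqrt_le_sqrt <|
    (hg.of_nonneg_of_le (fun i => sq_nonneg _) hdom).tsum_le_tsum hdom hg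

theorem summable_and_sqrt_tsum_sq_const_mul_mul_le {x y : ι → ℝ} {S M : ℝ} (c : ℝ)
    (hx : HasSum (fun i => x i ^ 2) S) (hy : ∀ i, y i ^ 2 ≤ M) :
    (Summable fun i => (c * (x i * y i)) ^ 2) ∧
      √(∑' i, (c * (x i * y i)) ^ 2) ≤ |c| * √S * √M := by
  have hS : 0 ≤ S := hasSum_le (fun i => sq_nonneg (x i)) hasSum_zero hx
  have hdom : ∀ i, (c * (x i * y i)) ^ 2 ≤ c ^ 2 * M * x i ^ 2 := fun i => by
    rw [mul_pow, mul_pow, mul_comm (x i ^ 2), ← mul_assoc]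
    gcongr
    exact hy i
  have hsum : Summable fun i => (c * (x i * y i)) ^ 2 :=
    (hx.summable.mul_left _).of_nonneg_of_le (fun i => sq_nonneg _) hdom
  refine ⟨hsum, ?_⟩
  calc √(∑' i, (c * (x i * y i)) ^ 2) ≤ √(c ^ 2 * M * S) :=
        sqrt_le_sqrt (hasSum_le hdom hsum.hasSum (hx.mul_left _))
    _ = |c| * √S * √M := by
        rw [mul_assoc, mul_comm M, sqrt_mul (sq_nonneg c), sqrt_mul hS, sqrt_sq_eq_abs, mul_assoc]

end SquareSummable

section Shift

variable {G : Type*} [AddCommGroup G] [TopologicalSpace G] [IsTopologicalAddGroup G]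
  {f : ℕ → G} {s : G}

theorem HasSum.comp_sub_of_apply_zero (hf : HasSum f s) (h0 : f 0 = 0) (j : ℕ) :
    HasSum (fun n => f (n - j)) s := by
  have hrange : ∑ i ∈ Finset.range j, f (i - j) = 0 :=
    Finset.sum_eq_zero fun i hi => by rw [Nat.sub_eq_zero_of_le (Finset.mem_range.1 hi).le, h0]
  simpa [hrange] using (hasSum_nat_add_iff (f := fun n => f (n - j)) j).1 (by simpa using hf)

theorem HasSum.comp_add_one_of_apply_zero (hf : HasSum f s) (h0 : f 0 = 0) :
    HasSum (fun n => f (n + 1)) s := by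
  simpa [h0] using (hasSum_nat_add_iff' 1).2 hf

end Shift

theorem mul_pow_le_mul_mul_pow_sub_one {k0 lam : ℝ} (hk0 : 0 ≤ k0) (hlam : 1 ≤ lam) (n : ℕ) :
    k0 * lam ^ n ≤ lam * (k0 * lam ^ (n - 1)) := by
  cases n with
  | zero => simpa [mul_comm] using mul_le_mul_of_nonneg_left hlam hk0
  | succ m => exact le_of_eq (by rw [Nat.add_sub_cancel, pow_succ]; ring)

theorem norm_shellB_le {k : ℕ → ℝ} {lam : ℝ} (hk : ∀ n, 0 ≤ k n) (hlam : 0 ≤ lam)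
    (hstep : ∀ n, k n ≤ lam * k (n - 1)) (a b : ℝ) (u v : ℕ → ℂ) (n : ℕ) :
    ‖shellB k a b u v n‖ ≤
      |a| * (k (n + 1) * ‖u (n + 1)‖ * ‖v (n + 2)‖)
        + lam * |b| * (k (n - 1) * ‖u (n - 1)‖ * ‖v (n + 1)‖)
        + |a| * (k (n - 1) * ‖u (n - 1)‖ * ‖v (n - 2)‖)
        + lam * |b| * (k (n - 2) * ‖u (n - 2)‖ * ‖v (n - 1)‖) := by
  rcases Nat.eq_zero_or_pos n with rfl | hn
  · have hterm : ∀ c i j, 0 ≤ c → 0 ≤ c * (k i * ‖u i‖ * ‖v j‖) := fun c i j hc =>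
      mul_nonneg hc (mul_nonneg (mul_nonneg (hk i) (norm_nonneg _)) (norm_nonneg _))
    simp only [shellB, if_pos, norm_zero]
    have hb : 0 ≤ lam * |b| := mul_nonneg hlam (abs_nonneg b)
    exact add_nonneg (add_nonneg (add_nonneg (hterm _ _ _ (abs_nonneg a)) (hterm _ _ _ hb))
      (hterm _ _ _ (abs_nonneg a))) (hterm _ _ _ hb)
  have hstep' : k (n - 1) ≤ lam * k (n - 2) := hstep (n - 1)
  simp only [shellB, if_neg hn.ne', norm_mul, norm_neg, Complex.norm_I, one_mul]
  refine norm_add₄_le.trans ?_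
  simp only [norm_mul, Complex.norm_real, RCLike.norm_conj, norm_eq_abs, abs_of_nonneg (hk _)]
  have hb : ∀ {i j : ℕ} {p q : ℝ}, 0 ≤ p → 0 ≤ q → k i ≤ lam * k j →
      |b| * k i * p * q ≤ lam * |b| * (k j * q * p) := fun hp hq h => by
    linarith [mul_le_mul_of_nonneg_left h (mul_nonneg (mul_nonneg (abs_nonneg b) hp) hq)]
  linarith [hb (norm_nonneg (v (n + 1))) (norm_nonneg (u (n - 1))) (hstep n),
    hb (norm_nonneg (v (n - 1))) (norm_nonneg (u (n - 2))) hstep']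

theorem shellB_bound_V_H_general (k0 lam a b : ℝ) (hk0 : 0 < k0) (hlam : 1 < lam)
    (k : ℕ → ℝ) (hk : ∀ n, k n = k0 * lam ^ n)
    (u v : ℕ → ℂ) (hu0 : u 0 = 0)
    (hu : Summable (fun n => (k n) ^ 2 * ‖u n‖ ^ 2))
    (hv : Summable (fun n => ‖v n‖ ^ 2)) :
    Real.sqrt (∑' n, ‖shellB k a b u v n‖ ^ 2)
      ≤ (2 * |a| + 2 * lam * |b|)
          * Real.sqrt (∑' n, (k n) ^ 2 * ‖u n‖ ^ 2)
          * Real.sqrt (∑' n, ‖v n‖ ^ 2) := by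
  have hlam0 : 0 ≤ lam := by linarith
  have hk_nonneg : ∀ n, 0 ≤ k n := fun n => by rw [hk]; positivity
  have hstep : ∀ n, k n ≤ lam * k (n - 1) := fun n => by
    simpa only [hk] using mul_pow_le_mul_mul_pow_sub_one hk0.le hlam.le n
  set x : ℕ → ℝ := fun n => k n * ‖u n‖
  have hx : HasSum (fun n => x n ^ 2) (∑' n, k n ^ 2 * ‖u n‖ ^ 2) := by
    simpa only [x, mul_pow] using hu.hasSum
  have hx0 : x 0 ^ 2 = 0 := by simp [x, hu0]
  have hvM : ∀ n, ‖v n‖ ^ 2 ≤ ∑' n, ‖v n‖ ^ 2 := fun n => hv.le_tsum n fun j _ => sq_nonneg _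
  obtain ⟨hs1, h1⟩ := summable_and_sqrt_tsum_sq_const_mul_mul_le |a|
    (hx.comp_add_one_of_apply_zero hx0) (fun n => hvM (n + 2))
  obtain ⟨hs2, h2⟩ := summable_and_sqrt_tsum_sq_const_mul_mul_le (lam * |b|)
    (hx.comp_sub_of_apply_zero hx0 1) (fun n => hvM (n + 1))
  obtain ⟨hs3, h3⟩ := summable_and_sqrt_tsum_sq_const_mul_mul_le |a|
    (hx.comp_sub_of_apply_zero hx0 1) (fun n => hvM (n - 2))
  obtain ⟨hs4, h4⟩ := summable_and_sqrt_tsum_sq_const_mul_mul_le (lam * |b|)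
    (hx.comp_sub_of_apply_zero hx0 2) (fun n => hvM (n - 1))
  obtain ⟨hs12, h12⟩ := summable_sq_add_and_sqrt_tsum_sq_add_le hs1 hs2
  obtain ⟨hs123, h123⟩ := summable_sq_add_and_sqrt_tsum_sq_add_le hs12 hs3
  obtain ⟨hs1234, h1234⟩ := summable_sq_add_and_sqrt_tsum_sq_add_le hs123 hs4
  have hB := sqrt_tsum_norm_sq_le
    (norm_shellB_le hk_nonneg hlam0 hstep a b u v) hs1234
  rw [abs_abs] at h1 h3
  rw [abs_of_nonneg (mul_nonneg hlam0 (abs_nonneg b))] at h2 h4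
  linarith

/-- `|B(u,v)| ≤ C₂ ‖u‖_V |v|` with `C₂ = 2|a| + 2λ|b|`. -/
theorem shellB_bound_V_H (k0 lam a b : ℝ) (hk0 : 0 < k0) (hlam : 1 < lam)
    (k : ℕ → ℝ) (hk : ∀ n, k n = k0 * lam ^ n)
    (u v : ℕ → ℂ) (hu0 : u 0 = 0) (hv0 : v 0 = 0)
    (hu : Summable (fun n => (k n) ^ 2 * ‖u n‖ ^ 2))
    (hv : Summable (fun n => ‖v n‖ ^ 2)) :
    Real.sqrt (∑' n, ‖shellB k a b u v n‖ ^ 2)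
      ≤ (2 * |a| + 2 * lam * |b|)
          * Real.sqrt (∑' n, (k n) ^ 2 * ‖u n‖ ^ 2)
          * Real.sqrt (∑' n, ‖v n‖ ^ 2) :=
  shellB_bound_V_H_general k0 lam a b hk0 hlam k hk u v hu0 hu hv
end

section
/- The trilinear form b(u,v,w) = ⟨B(u,v), w⟩ of the sabra shell model satisfies the antisymmetry b(u,v,w) = −b(u,w,v) for all u,v,w ∈ V (with appropriate conjugate-linear duality pairing), i.e., ⟨B(u,v),w⟩ = −⟨v, B(u,w)⟩. -/
open ComplexConjugate Complex

theorem tsum_nat_add_of_eq_zero {α : Type*} [AddCommMonoid α] [TopologicalSpace α] {f : ℕ → α}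
    {m : ℕ} (hf : ∀ n < m, f n = 0) : ∑' n, f (n + m) = ∑' n, f n :=
  (add_left_injective m).tsum_eq fun n hn =>
    ⟨n - m, Nat.sub_add_cancel (not_lt.1 fun h => hn (hf n h))⟩

theorem Summable.comp_nat_sub {α : Type*} [AddCommGroup α] [TopologicalSpace α]
    [IsTopologicalAddGroup α] {f : ℕ → α} (hf : Summable f) (m : ℕ) :
    Summable fun n => f (n - m) :=
  (summable_nat_add_iff m).1 (by simpa using hf)

theorem summable_mul_mul_of_norm_le {ι R : Type*} [NormedRing R] [CompleteSpace R]
    {c x y : ι → R} {C : ℝ} (hc : ∀ i, ‖c i‖ ≤ C) (hx : Summable fun i => ‖x i‖ ^ 2)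
    (hy : Summable fun i => ‖y i‖ ^ 2) : Summable fun i => c i * x i * y i := by
  refine Summable.of_norm_bounded ((hx.add hy).mul_left C) fun i => ?_
  have hC : 0 ≤ C := (norm_nonneg _).trans (hc i)
  calc ‖c i * x i * y i‖ ≤ ‖c i‖ * (‖x i‖ * ‖y i‖) := by
        rw [← mul_assoc]; exact norm_mul₃_le
    _ ≤ C * (‖x i‖ ^ 2 + ‖y i‖ ^ 2) := by
        gcongr
        · exact hc i
        · nlinarith [sq_nonneg (‖x i‖ - ‖y i‖)]

section Weighted

variable {ι E : Type*} [SeminormedAddCommGroup E] {k : ι → ℝ} {x : ι → E}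

theorem summable_norm_sq_of_weighted {c : ℝ} (hc : 0 < c) (hk : ∀ i, c ≤ k i)
    (hx : Summable fun i => k i ^ 2 * ‖x i‖ ^ 2) : Summable fun i => ‖x i‖ ^ 2 := by
  refine (hx.mul_left (c ^ 2)⁻¹).of_nonneg_of_le (fun _ => by positivity) fun i => ?_
  rw [le_inv_mul_iff₀ (by positivity)]
  gcongr
  exact hk i

theorem abs_mul_norm_le_sqrt_tsum (hx : Summable fun i => k i ^ 2 * ‖x i‖ ^ 2) (i : ι) :
    |k i| * ‖x i‖ ≤ √(∑' j, k j ^ 2 * ‖x j‖ ^ 2) := by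
  rw [Real.le_sqrt (by positivity) (tsum_nonneg fun _ => by positivity), mul_pow, sq_abs]
  exact hx.le_tsum i fun _ _ => by positivity

end Weighted

theorem abs_mul_norm_sub_one_le {k : ℕ → ℝ} {u : ℕ → ℂ} {C : ℝ} (hC : ∀ n, |k n| * ‖u n‖ ≤ C)
    (hC' : ∀ n, |k (n + 1)| * ‖u n‖ ≤ C) (n : ℕ) : |k n| * ‖u (n - 1)‖ ≤ C := by
  rcases n with _ | n
  · exact hC 0
  · exact hC' n

theorem norm_ofReal_mul_ofReal_mul (c r : ℝ) (z : ℂ) : ‖(c : ℂ) * r * z‖ = |c| * (|r| * ‖z‖) := by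
  rw [norm_mul, norm_mul, norm_real, norm_real, Real.norm_eq_abs, Real.norm_eq_abs, mul_assoc]

namespace ShellB

variable (k : ℕ → ℝ) (a b : ℝ) (u v w : ℕ → ℂ)

def pairTerm₁ (n : ℕ) : ℂ := a * k (n + 1) * conj (u (n + 1)) * v (n + 2) * conj (w n)

def pairTerm₂ (n : ℕ) : ℂ := b * k n * conj (u (n - 1)) * v (n + 1) * conj (w n)

def pairTerm₃ (n : ℕ) : ℂ := a * k (n - 1) * u (n - 1) * v (n - 2) * conj (w n)

def pairTerm₄ (n : ℕ) : ℂ := b * k (n - 1) * u (n - 2) * v (n - 1) * conj (w n)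

variable {k a b u v w}

theorem shellB_mul_conj (hw0 : w 0 = 0) (n : ℕ) :
    shellB k a b u v n * conj (w n) = -I * (pairTerm₁ k a u v w n + pairTerm₂ k b u v w n
      + pairTerm₃ k a u v w n + pairTerm₄ k b u v w n) := by
  rcases n with _ | n
  · simp [shellB, pairTerm₁, pairTerm₂, pairTerm₃, pairTerm₄, hw0]
  · simp only [shellB, pairTerm₁, pairTerm₂, pairTerm₃, pairTerm₄, if_neg n.succ_ne_zero]
    ring

theorem tsum_pairTerm₃ (hu0 : u 0 = 0) (hw0 : w 0 = 0) :
    ∑' n, pairTerm₃ k a u v w n = ∑' n, conj (pairTerm₁ k a u w v n) := by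
  rw [← tsum_nat_add_of_eq_zero (m := 2)]
  · refine tsum_congr fun n => ?_
    simp only [pairTerm₁, pairTerm₃, map_mul, conj_ofReal, conj_conj, Nat.add_sub_cancel,
      show n + 2 - 1 = n + 1 by omega]
    ring
  · intro n hn
    interval_cases n <;> simp [pairTerm₃, hu0, hw0]

theorem tsum_pairTerm₄ (hw0 : w 0 = 0) :
    ∑' n, pairTerm₄ k b u v w n = ∑' n, conj (pairTerm₂ k b u w v n) := by
  rw [← tsum_nat_add_of_eq_zero (m := 1)]
  · refine tsum_congr fun n => ?_
    simp only [pairTerm₂, pairTerm₄, map_mul, conj_ofReal, conj_conj, Nat.add_sub_cancel,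
      show n + 1 - 2 = n - 1 by omega]
    ring
  · intro n hn
    simp [pairTerm₄, Nat.lt_one_iff.1 hn, hw0]

section Summable

variable {C : ℝ}

theorem summable_pairTerm₁ (hC : ∀ n, |k n| * ‖u n‖ ≤ C) (hv : Summable fun n => ‖v n‖ ^ 2)
    (hw : Summable fun n => ‖w n‖ ^ 2) : Summable (pairTerm₁ k a u v w) := by
  refine summable_mul_mul_of_norm_le (C := |a| * C) (fun n => ?_) ((summable_nat_add_iff 2).2 hv)
    (by simpa using hw)
  rw [norm_ofReal_mul_ofReal_mul, Complex.norm_conj]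
  gcongr
  exact hC (n + 1)

theorem summable_pairTerm₂ (hC : ∀ n, |k n| * ‖u n‖ ≤ C)
    (hC' : ∀ n, |k (n + 1)| * ‖u n‖ ≤ C) (hv : Summable fun n => ‖v n‖ ^ 2)
    (hw : Summable fun n => ‖w n‖ ^ 2) : Summable (pairTerm₂ k b u v w) := by
  refine summable_mul_mul_of_norm_le (C := |b| * C) (fun n => ?_) ((summable_nat_add_iff 1).2 hv)
    (by simpa using hw)
  rw [norm_ofReal_mul_ofReal_mul, Complex.norm_conj]
  gcongr
  exact abs_mul_norm_sub_one_le hC hC' n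

theorem summable_pairTerm₃ (hC : ∀ n, |k n| * ‖u n‖ ≤ C) (hv : Summable fun n => ‖v n‖ ^ 2)
    (hw : Summable fun n => ‖w n‖ ^ 2) : Summable (pairTerm₃ k a u v w) := by
  refine summable_mul_mul_of_norm_le (C := |a| * C) (fun n => ?_) (hv.comp_nat_sub 2)
    (by simpa using hw)
  rw [norm_ofReal_mul_ofReal_mul]
  gcongr
  exact hC (n - 1)

theorem summable_pairTerm₄ (hC : ∀ n, |k n| * ‖u n‖ ≤ C)
    (hC' : ∀ n, |k (n + 1)| * ‖u n‖ ≤ C) (hv : Summable fun n => ‖v n‖ ^ 2)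
    (hw : Summable fun n => ‖w n‖ ^ 2) : Summable (pairTerm₄ k b u v w) := by
  refine summable_mul_mul_of_norm_le (C := |b| * C) (fun n => ?_) (hv.comp_nat_sub 1)
    (by simpa using hw)
  rw [norm_ofReal_mul_ofReal_mul, show n - 2 = n - 1 - 1 by omega]
  gcongr
  exact abs_mul_norm_sub_one_le hC hC' (n - 1)

theorem tsum_shellB_mul_conj (hC : ∀ n, |k n| * ‖u n‖ ≤ C)
    (hC' : ∀ n, |k (n + 1)| * ‖u n‖ ≤ C) (hv : Summable fun n => ‖v n‖ ^ 2)
    (hw : Summable fun n => ‖w n‖ ^ 2) (hu0 : u 0 = 0) (hw0 : w 0 = 0) :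
    ∑' n, shellB k a b u v n * conj (w n) = -I * (∑' n, pairTerm₁ k a u v w n
      + ∑' n, pairTerm₂ k b u v w n + conj (∑' n, pairTerm₁ k a u w v n)
      + conj (∑' n, pairTerm₂ k b u w v n)) := by
  have h₁ := summable_pairTerm₁ (a := a) hC hv hw
  have h₂ := summable_pairTerm₂ (b := b) hC hC' hv hw
  have h₃ := summable_pairTerm₃ (a := a) hC hv hw
  have h₄ := summable_pairTerm₄ (b := b) hC hC' hv hw
  rw [tsum_congr (shellB_mul_conj hw0), tsum_mul_left, (h₁.add h₂ |>.add h₃).tsum_add h₄,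
    (h₁.add h₂).tsum_add h₃, h₁.tsum_add h₂, tsum_pairTerm₃ hu0 hw0, tsum_pairTerm₄ hw0,
    conj_tsum, conj_tsum]

end Summable

end ShellB

theorem shellB_trilinear_antisym_general (k0 lam a b : ℝ) (hk0 : 0 < k0) (hlam : 1 < lam)
    (k : ℕ → ℝ) (hk : ∀ n, k n = k0 * lam ^ n)
    (u v w : ℕ → ℂ) (hu0 : u 0 = 0) (hv0 : v 0 = 0) (hw0 : w 0 = 0)
    (hu : Summable (fun n => (k n) ^ 2 * ‖u n‖ ^ 2))
    (hv : Summable (fun n => (k n) ^ 2 * ‖v n‖ ^ 2))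
    (hw : Summable (fun n => (k n) ^ 2 * ‖w n‖ ^ 2)) :
    ∑' n, shellB k a b u v n * (starRingEnd ℂ) (w n)
      = -∑' n, v n * (starRingEnd ℂ) (shellB k a b u w n) := by
  have hk_ge : ∀ n, k0 ≤ k n := fun n => by
    rw [hk]; exact le_mul_of_one_le_right hk0.le (one_le_pow₀ hlam.le)
  have hk_succ : ∀ n, |k (n + 1)| = lam * |k n| := fun n => by
    rw [hk, hk, pow_succ, abs_of_pos (by positivity), abs_of_pos (by positivity)]; ring
  set C := √(∑' j, k j ^ 2 * ‖u j‖ ^ 2)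
  have hC : ∀ n, |k n| * ‖u n‖ ≤ lam * C := fun n =>
    (abs_mul_norm_le_sqrt_tsum hu n).trans (le_mul_of_one_le_left (Real.sqrt_nonneg _) hlam.le)
  have hC' : ∀ n, |k (n + 1)| * ‖u n‖ ≤ lam * C := fun n => by
    rw [hk_succ, mul_assoc]
    exact mul_le_mul_of_nonneg_left (abs_mul_norm_le_sqrt_tsum hu n) (by positivity)
  have hv₂ := summable_norm_sq_of_weighted hk0 hk_ge hv
  have hw₂ := summable_norm_sq_of_weighted hk0 hk_ge hw
  have hswap : ∑' n, v n * conj (shellB k a b u w n)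
      = conj (∑' n, shellB k a b u w n * conj (v n)) := by
    simp only [conj_tsum, map_mul, conj_conj, mul_comm]
  rw [hswap, ShellB.tsum_shellB_mul_conj hC hC' hv₂ hw₂ hu0 hw0,
    ShellB.tsum_shellB_mul_conj hC hC' hw₂ hv₂ hu0 hv0]
  simp only [map_mul, map_add, map_neg, conj_I, conj_conj]
  ring

/-- antisymmetry of the trilinear form,
`⟨B(u,v), w⟩ = −⟨v, B(u,w)⟩`, i.e. `b(u,v,w) = −b(u,w,v)`. -/
theorem shellB_trilinear_antisym (k0 lam a b : ℝ) (hk0 : 0 < k0) (hlam : 1 < lam)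
    (k : ℕ → ℝ) (hk : ∀ n, k n = k0 * lam ^ n)
    (u v w : ℕ → ℂ) (hu0 : u 0 = 0) (hv0 : v 0 = 0) (hw0 : w 0 = 0)
    (hu : Summable (fun n => (k n) ^ 2 * ‖u n‖ ^ 2))
    (hv : Summable (fun n => (k n) ^ 2 * ‖v n‖ ^ 2))
    (hw : Summable (fun n => (k n) ^ 2 * ‖w n‖ ^ 2))
    (hS1 : Summable (fun n => shellB k a b u v n * (starRingEnd ℂ) (w n)))
    (hS2 : Summable (fun n => v n * (starRingEnd ℂ) (shellB k a b u w n))) :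
    ∑' n, shellB k a b u v n * (starRingEnd ℂ) (w n)
      = -∑' n, v n * (starRingEnd ℂ) (shellB k a b u w n) :=
  shellB_trilinear_antisym_general k0 lam a b hk0 hlam k hk u v w hu0 hv0 hw0 hu hv hw
end
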